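/- Let p be a prime number, N ≥ 2 an integer, and n ≥ 0 an integer, and let t = v_p(N−1) be the p-adic valuation of N−1. Then (∏_{k=0}^{n} (N+k)!/N!) · B_{N,n} ≡ (∏_{k=0}^{n} (1+k)!) · B_n (mod p^t), i.e., the p-adic valuation of the difference of these two rational numbers is at least t. -/

import Mathlib

/-- The power series ∑_{i≥0} (N!/(N+i)!) xⁱ over ℚ. -/
noncomputable def hgSeries (N : ℕ) : PowerSeries ℚ :=
  PowerSeries.mk fun i => (N.factorial : ℚ) / ((N + i).factorial : ℚ)

/-- The hypergeometric Bernoulli number `B_{N,n}`, defined so that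
`∑ (B_{N,n}/n!) xⁿ` is the multiplicative inverse of `hgSeries N` in ℚ[[x]]. -/
noncomputable def hB (N n : ℕ) : ℚ :=
  (n.factorial : ℚ) * PowerSeries.coeff n (hgSeries N)⁻¹

/-!
Put `A_M(n) = (∏_{k=0}^{n} (M+k)!/M!) · B_{M,n}`. Comparing coefficients in
`hgSeries M * (hgSeries M)⁻¹ = 1` gives a recurrence `A_M(n) = -∑_{i=1}^{n} K_M(n,i) A_M(n-i)`
whose coefficients `K_M(n,i)` are products of integers `M + j`. Hence `M ↦ A_M(n)` is an
integer polynomial `q(M)`, and `q(N) - q(1)` is divisible by `N - 1` in `ℤ`. Finally `A_1(n)`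
is the right-hand side because `B_{1,n} = B_n`.
-/

open Finset PowerSeries Nat

noncomputable def evalNat : Polynomial ℤ →+* (ℕ → ℚ) :=
  RingHom.pi fun M => Polynomial.eval₂RingHom (Int.castRingHom ℚ) M

@[simp]
theorem evalNat_apply (q : Polynomial ℤ) (M : ℕ) : evalNat q M = q.eval (M : ℤ) := by
  simp [evalNat, Polynomial.eval₂_at_natCast]

noncomputable abbrev intPolyFns : Subring (ℕ → ℚ) := evalNat.range

namespace intPolyFns

theorem add_natCast_mem (c : ℕ) : (fun M : ℕ => (M : ℚ) + c) ∈ intPolyFns :=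
  ⟨Polynomial.X + Polynomial.C (c : ℤ), by ext M; simp [evalNat]⟩

theorem factorial_div_factorial_mem {i n : ℕ} (h : i ≤ n) :
    (fun M : ℕ => ((M + n)! : ℚ) / (M + i)!) ∈ intPolyFns := by
  induction n, h using Nat.le_induction with
  | base =>
    convert one_mem intPolyFns using 1
    funext M
    exact div_self (Nat.cast_ne_zero.2 (factorial_ne_zero _))
  | succ n _ ih =>
    convert mul_mem (add_natCast_mem (n + 1)) ih using 1
    ext M
    rw [Pi.mul_apply, ← add_assoc, factorial_succ]
    push_cast
    ring

variable {p : ℕ} [Fact p.Prime]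

theorem padicNorm_sub_le {F : ℕ → ℚ} (hF : F ∈ intPolyFns) (a b : ℕ) :
    padicNorm p (F a - F b) ≤ padicNorm p ((a : ℚ) - b) := by
  obtain ⟨q, rfl⟩ := hF
  obtain ⟨e, he⟩ := Polynomial.sub_dvd_eval_sub (a : ℤ) b q
  have hcast : evalNat q a - evalNat q b = ((a : ℚ) - b) * e := by
    rw [evalNat_apply, evalNat_apply]
    exact_mod_cast he
  rw [hcast, padicNorm.mul]
  exact mul_le_of_le_one_right (padicNorm.nonneg _) (padicNorm.of_int e)

end intPolyFns

theorem padicNorm_natCast_sub_one_le {p : ℕ} [Fact p.Prime] (N : ℕ) :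
    padicNorm p ((N : ℚ) - 1) ≤ (p : ℚ) ^ (-(padicValNat p (N - 1) : ℤ)) := by
  rcases N with _ | N
  · simp
  · have hdvd : ((p ^ padicValNat p N : ℕ) : ℤ) ∣ (N : ℤ) :=
      Int.natCast_dvd_natCast.2 pow_padicValNat_dvd
    simpa using padicNorm.dvd_iff_norm_le.1 hdvd

theorem coeff_hgSeries (M i : ℕ) : coeff i (hgSeries M) = (M ! : ℚ) / (M + i)! :=
  coeff_mk _ _

theorem constantCoeff_hgSeries (M : ℕ) : constantCoeff (hgSeries M) = 1 := by
  simp [← coeff_zero_eq_constantCoeff_apply, coeff_hgSeries, factorial_ne_zero]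

theorem coeff_inv_hgSeries (M : ℕ) {n : ℕ} (hn : n ≠ 0) :
    coeff n (hgSeries M)⁻¹ =
      -∑ i ∈ Ico 1 (n + 1), ((M ! : ℚ) / (M + i)!) * coeff (n - i) (hgSeries M)⁻¹ := by
  have h := congrArg (coeff n)
    (PowerSeries.mul_inv_cancel (hgSeries M) (by simp [constantCoeff_hgSeries]))
  rw [coeff_mul, coeff_one, if_neg hn, Nat.sum_antidiagonal_eq_sum_range_succ_mk, range_eq_Ico,
    sum_eq_sum_Ico_succ_bot n.succ_pos] at h
  simp only [coeff_hgSeries, add_zero, zero_add, Nat.sub_zero, Nat.succ_eq_add_one] at h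
  rw [div_self (Nat.cast_ne_zero.2 (factorial_ne_zero M)), one_mul] at h
  linear_combination h

theorem hB_one (n : ℕ) : hB 1 n = bernoulli n := by
  have hexp : exp ℚ - 1 = X * hgSeries 1 := by
    ext m
    cases m with
    | zero => simp
    | succ m => simp [hgSeries, coeff_succ_X_mul, add_comm 1 m]
  have hinv : (hgSeries 1)⁻¹ = bernoulliPowerSeries ℚ := by
    rw [eq_comm, PowerSeries.eq_inv_iff_mul_eq_one (by simp [constantCoeff_hgSeries])]
    refine mul_left_cancel₀ (X_ne_zero (R := ℚ)) ?_
    rw [mul_one, mul_left_comm, ← hexp, bernoulliPowerSeries_mul_exp_sub_one]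
  rw [hB, hinv, bernoulliPowerSeries, coeff_mk, Algebra.algebraMap_self, RingHom.id_apply,
    mul_div_cancel₀ _ (Nat.cast_ne_zero.2 (factorial_ne_zero n))]

noncomputable def hBScale (M n : ℕ) : ℚ :=
  ∏ k ∈ range (n + 1), ((M + k)! : ℚ) / M !

noncomputable def scaledHB (M n : ℕ) : ℚ :=
  hBScale M n * hB M n

/-- `n!/(n-i)! · hBScale M n / (hBScale M (n-i) · (M+i)!/M!)`, written so that every factor is
visibly an integer polynomial in `M`. -/
noncomputable def hBRecCoeff (M n i : ℕ) : ℚ :=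
  n.descFactorial i * (∏ k ∈ Ico (n - i + 1) n, ((M + k)! : ℚ) / M !) *
    (((M + n)! : ℚ) / (M + i)!)

theorem scaledHB_zero (M : ℕ) : scaledHB M 0 = 1 := by
  simp [scaledHB, hBScale, hB, constantCoeff_hgSeries, factorial_ne_zero]

theorem hBRecCoeff_mul_hBScale (M : ℕ) {n i : ℕ} (hi : 1 ≤ i) (hin : i ≤ n) :
    hBRecCoeff M n i * (hBScale M (n - i) * (n - i)!) = hBScale M n * n ! * (M ! / (M + i)!) := by
  have hfact : ((n - i)! : ℚ) * n.descFactorial i = n ! := by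
    exact_mod_cast factorial_mul_descFactorial hin
  have hprod := prod_range_mul_prod_Ico (fun k => ((M + k)! : ℚ) / M !)
    (show n - i + 1 ≤ n by omega)
  rw [hBRecCoeff, hBScale, hBScale, prod_range_succ _ n, ← hfact, ← hprod]
  field_simp

theorem scaledHB_eq_neg_sum (M : ℕ) {n : ℕ} (hn : n ≠ 0) :
    scaledHB M n = -∑ i ∈ Ico 1 (n + 1), hBRecCoeff M n i * scaledHB M (n - i) := by
  rw [scaledHB, hB, coeff_inv_hgSeries M hn, mul_neg, mul_neg, Finset.mul_sum, Finset.mul_sum,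
    neg_inj]
  refine sum_congr rfl fun i hi => ?_
  rw [mem_Ico] at hi
  rw [scaledHB, hB]
  linear_combination
    (coeff (n - i) (hgSeries M)⁻¹) * (hBRecCoeff_mul_hBScale M (n := n) hi.1 (by omega)).symm

theorem hBRecCoeff_mem {n i : ℕ} (hin : i ≤ n) : (fun M => hBRecCoeff M n i) ∈ intPolyFns := by
  refine mul_mem (mul_mem (natCast_mem _ _) ?_) (intPolyFns.factorial_div_factorial_mem hin)
  rw [← prod_fn]
  exact prod_mem fun k _ => by simpa using intPolyFns.factorial_div_factorial_mem k.zero_le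

theorem scaledHB_mem (n : ℕ) : (fun M => scaledHB M n) ∈ intPolyFns := by
  induction n using Nat.strong_induction_on with
  | _ n ih =>
  rcases eq_or_ne n 0 with rfl | hn
  · simp only [scaledHB_zero]
    exact one_mem intPolyFns
  · have hrec : (fun M => scaledHB M n) =
        -∑ i ∈ Ico 1 (n + 1), (fun M => hBRecCoeff M n i) * fun M => scaledHB M (n - i) := by
      ext M
      simp [scaledHB_eq_neg_sum M hn]
    rw [hrec]
    refine neg_mem (sum_mem fun i hi => ?_)
    rw [mem_Ico] at hi
    exact mul_mem (hBRecCoeff_mem (by omega)) (ih _ (by omega))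

theorem scaledHB_one (n : ℕ) :
    scaledHB 1 n = (∏ k ∈ range (n + 1), ((1 + k)! : ℚ)) * bernoulli n := by
  simp [scaledHB, hBScale, hB_one]

theorem stmt4_general (p : ℕ) (hp : p.Prime) (N : ℕ) (n : ℕ) :
    padicNorm p
        ((∏ k ∈ Finset.range (n + 1), ((N + k).factorial : ℚ) / (N.factorial : ℚ)) * hB N n
          - (∏ k ∈ Finset.range (n + 1), ((1 + k).factorial : ℚ)) * bernoulli n)
      ≤ (p : ℚ) ^ (-(padicValNat p (N - 1) : ℤ)) := by
  have := Fact.mk hp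
  rw [← scaledHB_one]
  calc padicNorm p (scaledHB N n - scaledHB 1 n) ≤ padicNorm p ((N : ℚ) - (1 : ℕ)) :=
        intPolyFns.padicNorm_sub_le (scaledHB_mem n) N 1
    _ ≤ _ := by exact_mod_cast padicNorm_natCast_sub_one_le N

/-- Kummer-type congruence: the p-adic valuation of the difference is at least
`t = v_p(N-1)`, expressed via the p-adic norm as `padicNorm p (A - B) ≤ p^(-t)`. -/
theorem stmt4 (p : ℕ) (hp : p.Prime) (N : ℕ) (hN : 2 ≤ N) (n : ℕ) :
    padicNorm p
        ((∏ k ∈ Finset.range (n + 1), ((N + k).factorial : ℚ) / (N.factorial : ℚ)) * hB N n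
          - (∏ k ∈ Finset.range (n + 1), ((1 + k).factorial : ℚ)) * bernoulli n)
      ≤ (p : ℚ) ^ (-(padicValNat p (N - 1) : ℤ)) :=
  stmt4_general p hp N n
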